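/- Let Σ ∈ ℝ^{d×d} be symmetric positive definite and p = N(0, Σ). Then the projected Fisher information of γ relative to p equals tI(γ, p) = Σ_{i=1}^d ((Σ^{-1})_{ii} − 1)², which coincides with Σ_{i=1}^d H(p)_{ii}²; i.e., the lower bound tI(γ,p) ≥ Σ_i H(p)_{ii}² holds with equality for centered Gaussian targets. -/

import Mathlib

open MeasureTheory ProbabilityTheory Matrix

/-- The standard Gaussian measure `γ = N(0, I_d)` on `ℝ^d`. -/
noncomputable def stdGaussian (d : ℕ) : Measure (Fin d → ℝ) :=
  Measure.pi fun _ => ProbabilityTheory.gaussianReal 0 1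

/-- The `i`-th partial derivative `∂ᵢ log f` of the log of a density `f`. -/
noncomputable def partialLog {d : ℕ} (f : (Fin d → ℝ) → ℝ) (i : Fin d) (x : Fin d → ℝ) : ℝ :=
  fderiv ℝ (fun z => Real.log (f z)) x (Pi.single i 1)

/-- The projected Fisher information `tI(γ, p)` of the standard Gaussian `γ` relative to the
target with density `f`:
`tI(γ, p) = ∑ i, ∫_ℝ (∫_{ℝ^{d-1}} (∂ᵢ log p(x) + x i) dγ_{-i}(x_{-i}))² dγ₁(x i)`.
The inner conditional expectation over `γ_{-i}` given `x i = t` is written as an integral over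
the full Gaussian `γ` of the integrand with the `i`-th coordinate overwritten by `t`. -/
noncomputable def projFisher (d : ℕ) (f : (Fin d → ℝ) → ℝ) : ℝ :=
  ∑ i : Fin d, ∫ t : ℝ,
      (∫ y, (partialLog f i (Function.update y i t) + t) ∂(stdGaussian d)) ^ 2
    ∂(ProbabilityTheory.gaussianReal 0 1)

/-- The relative-score cross-covariance matrix
`H(p) = ∫ x (∇ log p(x) + x)ᵀ dγ(x)`, i.e. `H i j = E_γ[x i * (∂ⱼ log p(x) + x j)]`. -/
noncomputable def crossCov (d : ℕ) (f : (Fin d → ℝ) → ℝ) : Matrix (Fin d) (Fin d) ℝ :=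
  Matrix.of fun i j => ∫ x, x i * (partialLog f j x + x j) ∂(stdGaussian d)

/-- The density of the centered Gaussian `N(0, S)` on `ℝ^d`, for `S` positive definite. -/
noncomputable def gaussDensity {d : ℕ} (S : Matrix (Fin d) (Fin d) ℝ) (x : Fin d → ℝ) : ℝ :=
  Real.exp (-(1 / 2 : ℝ) * (x ⬝ᵥ S⁻¹.mulVec x)) / Real.sqrt ((2 * Real.pi) ^ d * S.det)

/-!
For `p = N(0, Σ)` the relative score `∇ log p(x) + x = (I - Σ⁻¹) x` is linear in `x`. Under `γ`
the coordinates are independent, centred and of unit variance, so averaging the `i`-th coordinate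
of the relative score over `x_{-i}` leaves `(I - Σ⁻¹)ᵢᵢ xᵢ`, whose square integrates against `γ₁`
to `(1 - (Σ⁻¹)ᵢᵢ)²`; and `H(p) = E_γ[x xᵀ] (I - Σ⁻¹)ᵀ = (I - Σ⁻¹)ᵀ` has the same diagonal.
-/

open scoped ENNReal NNReal

lemma integral_eval_mul_eval_pi_of_ne {ι : Type*} [Fintype ι] {μ : ι → Measure ℝ}
    [∀ i, IsProbabilityMeasure (μ i)] {i j : ι} (hij : i ≠ j) :
    ∫ x, x i * x j ∂Measure.pi μ = (∫ t, t ∂μ i) * ∫ t, t ∂μ j := by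
  have hindep := (iIndepFun_pi (μ := μ) (X := fun _ t => t) fun _ => aemeasurable_id).indepFun hij
  rw [← integral_eval, ← integral_eval]
  exact hindep.integral_fun_mul_eq_mul_integral (measurable_pi_apply i).aestronglyMeasurable
    (measurable_pi_apply j).aestronglyMeasurable

lemma integral_sq_gaussianReal_zero (v : ℝ≥0) : ∫ t, t ^ 2 ∂gaussianReal 0 v = v := by
  rw [← variance_id_gaussianReal (μ := 0),
    variance_of_integral_eq_zero aemeasurable_id integral_id_gaussianReal]
  rfl

lemma mulVec_update_apply {m n R : Type*} [Fintype n] [DecidableEq n] [CommRing R]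
    (A : Matrix m n R) (y : n → R) (i : n) (t : R) (k : m) :
    (A *ᵥ Function.update y i t) k = (A *ᵥ y) k + A k i * (t - y i) := by
  have hupdate : Function.update y i t = y + Pi.single i (t - y i) := by
    ext j
    rcases eq_or_ne j i with rfl | hj <;> simp [*]
  simp [hupdate, mulVec_add, mulVec_single]

lemma hasFDerivAt_dotProduct_mulVec_self {ι : Type*} [Fintype ι] [DecidableEq ι]
    (A : Matrix ι ι ℝ) (x : ι → ℝ) :
    HasFDerivAt (fun z : ι → ℝ => z ⬝ᵥ A *ᵥ z)
      (LinearMap.toContinuousLinearMap (toLinearMap₂' ℝ A x + (toLinearMap₂' ℝ A).flip x)) x := by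
  let M : (ι → ℝ) →L[ℝ] (ι → ℝ) := LinearMap.toContinuousLinearMap (mulVecLin A)
  have hM (p : ι) : HasFDerivAt (fun z : ι → ℝ => (A *ᵥ z) p)
      ((ContinuousLinearMap.proj p).comp M) x :=
    ((ContinuousLinearMap.proj p).comp M).hasFDerivAt
  refine (HasFDerivAt.fun_sum fun p _ => (hasFDerivAt_apply p x).mul (hM p)).congr_fderiv ?_
  ext v
  simp [M, toLinearMap₂'_apply', dotProduct, Finset.sum_add_distrib, mul_comm]

section StdGaussian

variable {d : ℕ}

instance : IsProbabilityMeasure (stdGaussian d) := by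
  rw [_root_.stdGaussian]; infer_instance

lemma memLp_eval_stdGaussian (i : Fin d) {p : ℝ≥0∞} (hp : p ≠ ∞) :
    MemLp (fun x => x i) p (stdGaussian d) :=
  (memLp_id_gaussianReal' p hp).comp_measurePreserving (measurePreserving_eval _ i)

lemma integrable_eval_stdGaussian (i : Fin d) : Integrable (fun x => x i) (stdGaussian d) :=
  (memLp_eval_stdGaussian i ENNReal.one_ne_top).integrable le_rfl

lemma integral_eval_stdGaussian (i : Fin d) : ∫ x, x i ∂stdGaussian d = 0 := by
  rw [_root_.stdGaussian, integral_eval, integral_id_gaussianReal]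

lemma integral_eval_mul_eval_stdGaussian (i j : Fin d) :
    ∫ x, x i * x j ∂stdGaussian d = if i = j then 1 else 0 := by
  rcases eq_or_ne i j with rfl | hij
  · simp_rw [if_pos, ← sq]
    rw [_root_.stdGaussian, integral_comp_eval (f := fun t => t ^ 2) (by fun_prop),
      integral_sq_gaussianReal_zero, NNReal.coe_one]
  · rw [if_neg hij, _root_.stdGaussian, integral_eval_mul_eval_pi_of_ne hij,
      integral_id_gaussianReal, zero_mul]

variable (B : Matrix (Fin d) (Fin d) ℝ)

lemma integrable_mulVec_apply_stdGaussian (i : Fin d) :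
    Integrable (fun x => (B *ᵥ x) i) (stdGaussian d) := by
  simp only [mulVec, dotProduct]
  exact integrable_finsetSum _ fun j _ => (integrable_eval_stdGaussian j).const_mul (B i j)

lemma integral_mulVec_apply_stdGaussian (i : Fin d) : ∫ x, (B *ᵥ x) i ∂stdGaussian d = 0 := by
  simp only [mulVec, dotProduct]
  rw [integral_finsetSum _ fun j _ => (integrable_eval_stdGaussian j).const_mul _]
  simp [integral_const_mul, integral_eval_stdGaussian]

lemma integral_eval_mul_mulVec_apply_stdGaussian (i j : Fin d) :
    ∫ x, x i * (B *ᵥ x) j ∂stdGaussian d = B j i := by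
  have hint (k : Fin d) : Integrable (fun x => B j k * (x i * x k)) (stdGaussian d) :=
    ((memLp_eval_stdGaussian i (p := 2) ENNReal.ofNat_ne_top).integrable_mul
      (memLp_eval_stdGaussian k (p := 2) ENNReal.ofNat_ne_top)).const_mul _
  simp only [mulVec, dotProduct, Finset.mul_sum, mul_left_comm (_ : ℝ) (B j _)]
  rw [integral_finsetSum _ fun k _ => hint k]
  simp [integral_const_mul, integral_eval_mul_eval_stdGaussian]

lemma integral_mulVec_update_apply_stdGaussian (i k : Fin d) (t : ℝ) :
    ∫ y, (B *ᵥ Function.update y i t) k ∂stdGaussian d = B k i * t := by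
  have hdev : Integrable (fun y => t - y i) (stdGaussian d) :=
    (integrable_const t).sub (integrable_eval_stdGaussian i)
  simp_rw [mulVec_update_apply]
  rw [integral_add (integrable_mulVec_apply_stdGaussian B k) (hdev.const_mul _),
    integral_const_mul, integral_sub (integrable_const t) (integrable_eval_stdGaussian i),
    integral_mulVec_apply_stdGaussian, integral_eval_stdGaussian]
  simp

end StdGaussian

section LinearRelativeScore

variable {d : ℕ} {f : (Fin d → ℝ) → ℝ} {B : Matrix (Fin d) (Fin d) ℝ}

lemma projFisher_eq_sum_diag_sq (hf : ∀ i x, partialLog f i x + x i = (B *ᵥ x) i) :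
    projFisher d f = ∑ i, B i i ^ 2 := by
  refine Finset.sum_congr rfl fun i _ => ?_
  have hinner (t : ℝ) :
      ∫ y, (partialLog f i (Function.update y i t) + t) ∂stdGaussian d = B i i * t := by
    rw [← integral_mulVec_update_apply_stdGaussian]
    congr with y
    rw [← hf, Function.update_self]
  simp_rw [hinner, mul_pow, integral_const_mul, integral_sq_gaussianReal_zero, NNReal.coe_one,
    mul_one]

lemma crossCov_eq_transpose (hf : ∀ i x, partialLog f i x + x i = (B *ᵥ x) i) :
    crossCov d f = Bᵀ := by
  ext i j
  simp_rw [crossCov, of_apply, hf, integral_eval_mul_mulVec_apply_stdGaussian, transpose_apply]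

end LinearRelativeScore

section GaussDensity

variable {d : ℕ} {S : Matrix (Fin d) (Fin d) ℝ}

lemma log_gaussDensity (hS : S.PosDef) (x : Fin d → ℝ) :
    Real.log (gaussDensity S x) =
      -(1 / 2 : ℝ) * (x ⬝ᵥ S⁻¹ *ᵥ x) - Real.log (Real.sqrt ((2 * Real.pi) ^ d * S.det)) := by
  have hc : Real.sqrt ((2 * Real.pi) ^ d * S.det) ≠ 0 :=
    (Real.sqrt_pos.mpr (by have := hS.det_pos; positivity)).ne'
  rw [gaussDensity, Real.log_div (Real.exp_ne_zero _) hc, Real.log_exp]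

lemma partialLog_gaussDensity (hS : S.PosDef) (i : Fin d) (x : Fin d → ℝ) :
    partialLog (gaussDensity S) i x = -(S⁻¹ *ᵥ x) i := by
  have hcol : S⁻¹.col i = S⁻¹ i := funext fun j => hS.isHermitian.inv.apply i j
  have hQ := hasFDerivAt_dotProduct_mulVec_self S⁻¹ x
  rw [partialLog, funext (log_gaussDensity hS), fderiv_sub_const,
    fderiv_const_mul hQ.differentiableAt, hQ.fderiv]
  simp [toLinearMap₂'_apply', hcol, mulVec, dotProduct_comm x]
  ring

lemma partialLog_gaussDensity_add_eval (hS : S.PosDef) (i : Fin d) (x : Fin d → ℝ) :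
    partialLog (gaussDensity S) i x + x i = ((1 - S⁻¹) *ᵥ x) i := by
  rw [partialLog_gaussDensity hS, sub_mulVec, one_mulVec, Pi.sub_apply]
  ring

end GaussDensity

/-- Let `Σ` be symmetric positive definite and `p = N(0, Σ)`.  Then the
projected Fisher information of `γ` relative to `p` equals
`tI(γ, p) = ∑ i, ((Σ⁻¹) i i − 1)²`, which coincides with `∑ i, (H(p) i i)²`; i.e. the lower
bound `tI(γ, p) ≥ ∑ i, (H(p) i i)²` holds with equality for centered Gaussian targets. -/
theorem projFisher_gaussian_eq_diag_square_sum
    {d : ℕ} (Sig : Matrix (Fin d) (Fin d) ℝ) (hSig : Sig.PosDef) :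
    projFisher d (gaussDensity Sig) = ∑ i, ((Sig⁻¹ i i) - 1) ^ 2 ∧
    projFisher d (gaussDensity Sig) = ∑ i, (crossCov d (gaussDensity Sig) i i) ^ 2 := by
  have hscore := partialLog_gaussDensity_add_eval hSig
  rw [projFisher_eq_sum_diag_sq hscore, crossCov_eq_transpose hscore]
  constructor <;> refine Finset.sum_congr rfl fun i _ => ?_
  · rw [Matrix.sub_apply, one_apply_eq]
    ring
  · rw [transpose_apply]
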